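/- Let β > 1 and let ℓ(1,β) denote the longest run of zeros immediately after the first digit in the quasi-greedy expansion ε*(1,β) of 1. Then the word 1 0^{ℓ(1,β)+1} (a one followed by ℓ(1,β)+1 zeros) is a full word, i.e., the cylinder it determines has length exactly β^{−(ℓ(1,β)+2)}. -/

import Mathlib

open Filter MeasureTheory Set

noncomputable def Tb (β : ℝ) (x : ℝ) : ℝ := Int.fract (β * x)

/-- `dig β x n` is the (n+1)-st digit `ε_{n+1}(x)` of the β-expansion of `x`. -/
noncomputable def dig (β : ℝ) (x : ℝ) (n : ℕ) : ℤ := ⌊β * (Tb β)^[n] x⌋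

/-- `conv β x n` is the n-th convergent `ω_n(x)` of the β-expansion of `x`. -/
noncomputable def conv (β : ℝ) (x : ℝ) (n : ℕ) : ℝ :=
  ∑ k ∈ Finset.range n, (dig β x k : ℝ) / β ^ (k + 1)

/-- The n-th order cylinder determined by the word `w`. -/
def cyl (β : ℝ) {n : ℕ} (w : Fin n → ℤ) : Set ℝ :=
  {x ∈ Set.Ico (0:ℝ) 1 | ∀ k : Fin n, dig β x k = w k}

/-- A finite word is β-admissible if it is the beginning of the β-expansion of some x ∈ [0,1]. -/
def admissible (β : ℝ) {n : ℕ} (w : Fin n → ℤ) : Prop :=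
  ∃ x ∈ Set.Icc (0:ℝ) 1, ∀ k : Fin n, dig β x k = w k

/-- The β-expansion of 1 is finite with last non-zero digit at index m (0-indexed). -/
def finiteExpOne (β : ℝ) : Prop := ∃ m : ℕ, dig β 1 m ≠ 0 ∧ ∀ k, m < k → dig β 1 k = 0

open scoped Classical in
/-- The quasi-greedy expansion `ε*(1,β)` of 1 (0-indexed): equal to the β-expansion of 1
if that is infinite, and to its periodic modification otherwise. -/
noncomputable def epsStar (β : ℝ) : ℕ → ℤ :=
  if h : finiteExpOne β then
    fun n =>
      if n % (Classical.choose h + 1) = Classical.choose h then dig β 1 (Classical.choose h) - 1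
      else dig β 1 (n % (Classical.choose h + 1))
  else dig β 1

/-- Strict lexicographic order on integer sequences. -/
def lexLt (a b : ℕ → ℤ) : Prop := ∃ k, (∀ j < k, a j = b j) ∧ a k < b k

/-- An infinite sequence is β-admissible if it is the β-expansion of some x ∈ [0,1). -/
def seqAdmissible (β : ℝ) (ε : ℕ → ℤ) : Prop :=
  ∃ x ∈ Set.Ico (0:ℝ) 1, ∀ n, dig β x n = ε n

/-- `zrun β` = ℓ(1,β), the longest run of zeros immediately after the first digit of
`ε*(1,β)` (which occupies index 0). -/
noncomputable def zrun (β : ℝ) : ℕ :=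
  sSup {i : ℕ | ∀ j : ℕ, 1 ≤ j → j ≤ i → epsStar β j = 0}

lemma conv_succ (β x : ℝ) (n : ℕ) :
    conv β x (n+1) = conv β x n + (dig β x n : ℝ)/β^(n+1) := Finset.sum_range_succ _ _

lemma iter_eq {β : ℝ} (hβ : 1 < β) (x : ℝ) :
    ∀ n, (Tb β)^[n] x = β^n * (x - conv β x n) := by
  intro n
  induction n with
  | zero => simp [conv]
  | succ n ih =>
    have hβ0 : (0:ℝ) < β := lt_trans one_pos hβ
    have h1 : Tb β ((Tb β)^[n] x) = β * (Tb β)^[n] x - (dig β x n : ℝ) := by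
      rw [Tb, Int.fract, dig]
    rw [Function.iterate_succ_apply', h1, ih, conv_succ]
    have hne : β ^ n ≠ 0 := pow_ne_zero _ (ne_of_gt hβ0)
    field_simp
    ring

lemma iter_nonneg {β : ℝ} (x : ℝ) (hx : 0 ≤ x) : ∀ n, 0 ≤ (Tb β)^[n] x := by
  intro n
  cases n with
  | zero => simpa
  | succ n => rw [Function.iterate_succ_apply']; exact Int.fract_nonneg _

lemma iter_lt_one {β : ℝ} (x : ℝ) (hx : x < 1) : ∀ n, (Tb β)^[n] x < 1 := by
  intro n
  cases n with
  | zero => simpa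
  | succ n => rw [Function.iterate_succ_apply']; exact Int.fract_lt_one _

lemma dig_nonneg {β : ℝ} (hβ : 1 < β) (x : ℝ) (hx : 0 ≤ x) (n : ℕ) : 0 ≤ dig β x n := by
  apply Int.floor_nonneg.mpr
  have := iter_nonneg (β := β) x hx n
  positivity

lemma conv_one_le {β : ℝ} (hβ : 1 < β) (N : ℕ) : conv β 1 N ≤ 1 := by
  have h := iter_eq hβ 1 N
  have h0 : 0 ≤ (Tb β)^[N] 1 := iter_nonneg 1 (by norm_num) N
  have hp : (0:ℝ) < β ^ N := pow_pos (lt_trans one_pos hβ) N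
  nlinarith [h0, h.symm.le, h.le]

lemma dig_one_zero {β : ℝ} : dig β 1 0 = ⌊β⌋ := by simp [dig]

-- finite case: conv β 1 (m+1) = 1
lemma conv_fin {β : ℝ} (hβ : 1 < β) (m : ℕ) (hm : ∀ k, m < k → dig β 1 k = 0) :
    conv β 1 (m+1) = 1 := by
  have hβ0 : (0:ℝ) < β := lt_trans one_pos hβ
  set t := (Tb β)^[m+1] 1 with ht
  have ht0 : 0 ≤ t := iter_nonneg 1 (by norm_num) _
  have hgrow : ∀ k, (Tb β)^[m+1+k] 1 = β^k * t := by
    intro k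
    induction k with
    | zero => simp [← ht]
    | succ k ih =>
      have hd : dig β 1 (m+1+k) = 0 := hm _ (by omega)
      have hfr : Int.fract (β * (Tb β)^[m+1+k] 1) = β * (Tb β)^[m+1+k] 1 := by
        have h0 : ⌊β * (Tb β)^[m+1+k] 1⌋ = 0 := hd
        rw [Int.fract, h0]
        simp
      have : (Tb β)^[m+1+(k+1)] 1 = Tb β ((Tb β)^[m+1+k] 1) := by
        rw [show m+1+(k+1) = (m+1+k)+1 by omega, Function.iterate_succ_apply']
      rw [this, Tb, hfr, ih]
      ring
  have htz : t = 0 := by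
    by_contra h
    have ht0' : 0 < t := lt_of_le_of_ne ht0 (Ne.symm h)
    obtain ⟨k, hk⟩ := pow_unbounded_of_one_lt (1/t) hβ
    have hlt : (Tb β)^[m+1+k] 1 < 1 := by
      rw [show m+1+k = (m+k)+1 by omega, Function.iterate_succ_apply']
      exact Int.fract_lt_one _
    rw [hgrow k] at hlt
    rw [div_lt_iff₀ ht0'] at hk
    nlinarith
  have h := iter_eq hβ 1 (m+1)
  rw [← ht, htz] at h
  have hp : (0:ℝ) < β ^ (m+1) := pow_pos hβ0 _
  nlinarith [h.symm]

lemma epsStar_facts {β : ℝ} (hβ : 1 < β) :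
    (∀ n, 0 ≤ epsStar β n) ∧ 1 ≤ epsStar β 0 ∧ (∃ j, 1 ≤ j ∧ epsStar β j ≠ 0) ∧
    ∀ N, ∑ j ∈ Finset.range N, (epsStar β j : ℝ)/β^(j+1) ≤ 1 := by
  classical
  have hβ0 : (0:ℝ) < β := lt_trans one_pos hβ
  have hfl : 1 ≤ ⌊β⌋ := Int.le_floor.mpr (by exact_mod_cast hβ.le)
  by_cases hfin : finiteExpOne β
  · obtain ⟨hdm, hzero⟩ := Classical.choose_spec hfin
    set m := Classical.choose hfin with hmdef
    have he : ∀ n, epsStar β n =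
        if n % (m + 1) = m then dig β 1 m - 1 else dig β 1 (n % (m + 1)) := by
      intro n
      rw [epsStar, dif_pos hfin]
    have hdm1 : 1 ≤ dig β 1 m := lt_of_le_of_ne (dig_nonneg hβ 1 (by norm_num) m) (Ne.symm hdm)
    have hconv : conv β 1 (m+1) = 1 := conv_fin hβ m hzero
    have hnn : ∀ n, 0 ≤ epsStar β n := by
      intro n
      rw [he n]
      split
      · omega
      · exact dig_nonneg hβ 1 (by norm_num) _
    have hd0 : dig β 1 0 = ⌊β⌋ := dig_one_zero
    have hd02 : m = 0 → 2 ≤ dig β 1 0 := by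
      intro hm0
      rw [hm0] at hconv
      rw [conv, Finset.sum_range_one, pow_one] at hconv
      have hb : (dig β 1 0 : ℝ) = β := by
        field_simp at hconv
        linarith
      have h2 : (1:ℝ) < (dig β 1 0 : ℝ) := by rw [hb]; exact hβ
      have h3 : (1:ℤ) < dig β 1 0 := by exact_mod_cast h2
      omega
    have he0 : 1 ≤ epsStar β 0 := by
      rcases Nat.eq_zero_or_pos m with hm0 | hmpos
      · rw [he 0, hm0]
        norm_num
        have := hd02 hm0
        omega
      · rw [he 0]
        have h0 : 0 % (m+1) = 0 := Nat.zero_mod _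
        rw [h0, if_neg (Ne.symm hmpos.ne'), hd0]
        exact hfl
    have hex : ∃ j, 1 ≤ j ∧ epsStar β j ≠ 0 := by
      rcases Nat.eq_zero_or_pos m with hm0 | hmpos
      · refine ⟨1, le_refl _, ?_⟩
        rw [he 1, hm0]
        norm_num
        have := hd02 hm0
        omega
      · refine ⟨m+1, by omega, ?_⟩
        rw [he (m+1)]
        have h0 : (m+1) % (m+1) = 0 := Nat.mod_self _
        rw [h0, if_neg (Ne.symm hmpos.ne'), hd0]
        omega
    refine ⟨hnn, he0, hex, ?_⟩
    -- partial sums bounded by 1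
    have hterm : ∀ j, 0 ≤ (epsStar β j : ℝ)/β^(j+1) := by
      intro j
      have := hnn j
      have : (0:ℝ) ≤ (epsStar β j : ℝ) := by exact_mod_cast this
      positivity
    have hS1 : ∑ k ∈ Finset.range (m+1), (epsStar β k : ℝ)/β^(k+1)
        = 1 - (β^(m+1))⁻¹ := by
      rw [Finset.sum_range_succ]
      have hmid : ∀ k ∈ Finset.range m, (epsStar β k : ℝ)/β^(k+1)
          = (dig β 1 k : ℝ)/β^(k+1) := by
        intro k hk
        rw [Finset.mem_range] at hk
        rw [he k, Nat.mod_eq_of_lt (by omega), if_neg (by omega)]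
      rw [Finset.sum_congr rfl hmid]
      have hem : epsStar β m = dig β 1 m - 1 := by
        rw [he m, Nat.mod_eq_of_lt (by omega), if_pos rfl]
      rw [hem]
      have hc : conv β 1 (m+1) = (∑ k ∈ Finset.range m, (dig β 1 k : ℝ)/β^(k+1))
          + (dig β 1 m : ℝ)/β^(m+1) := Finset.sum_range_succ _ _
      rw [hconv] at hc
      push_cast
      have hp : (0:ℝ) < β^(m+1) := pow_pos hβ0 _
      field_simp at hc ⊢
      linarith
    have hper : ∀ i, epsStar β (m+1+i) = epsStar β i := by
      intro i
      rw [he, he, Nat.add_mod_left]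
    intro N
    induction N using Nat.strong_induction_on with
    | _ N ih =>
      by_cases hN : N ≤ m+1
      · calc ∑ j ∈ Finset.range N, (epsStar β j : ℝ)/β^(j+1)
            ≤ ∑ j ∈ Finset.range (m+1), (epsStar β j : ℝ)/β^(j+1) :=
              Finset.sum_le_sum_of_subset_of_nonneg
                (Finset.range_subset_range.mpr hN) (fun i _ _ => hterm i)
          _ = 1 - (β^(m+1))⁻¹ := hS1
          _ ≤ 1 := by
              have : (0:ℝ) < (β^(m+1))⁻¹ := by positivity
              linarith
      · have hsplit : N = (m+1) + (N - (m+1)) := by omega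
        set N' := N - (m+1) with hN'
        have hN'lt : N' < N := by omega
        have hrw : ∑ j ∈ Finset.range N, (epsStar β j : ℝ)/β^(j+1)
            = (∑ j ∈ Finset.range (m+1), (epsStar β j : ℝ)/β^(j+1))
              + (β^(m+1))⁻¹ * ∑ j ∈ Finset.range N', (epsStar β j : ℝ)/β^(j+1) := by
          rw [hsplit, Finset.sum_range_add, Finset.mul_sum]
          congr 1
          refine Finset.sum_congr rfl fun i _ => ?_
          rw [hper i, show (m+1+i)+1 = (m+1)+(i+1) by omega, pow_add]
          have h1 : β^(m+1) ≠ 0 := by positivity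
          have h2 : β^(i+1) ≠ 0 := by positivity
          field_simp
        rw [hrw, hS1]
        have hc : (0:ℝ) < (β^(m+1))⁻¹ := by positivity
        have hIH := ih N' hN'lt
        nlinarith
  · have he : epsStar β = dig β 1 := by rw [epsStar, dif_neg hfin]
    have hnn : ∀ n, 0 ≤ epsStar β n := by
      intro n; rw [he]; exact dig_nonneg hβ 1 (by norm_num) n
    have he0 : 1 ≤ epsStar β 0 := by rw [he, dig_one_zero]; exact hfl
    have hex : ∃ j, 1 ≤ j ∧ epsStar β j ≠ 0 := by
      rw [finiteExpOne] at hfin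
      push_neg at hfin
      obtain ⟨k, hk, hkne⟩ := hfin 0 (by rw [dig_one_zero]; omega)
      exact ⟨k, by omega, by rw [he]; exact hkne⟩
    refine ⟨hnn, he0, hex, fun N => ?_⟩
    rw [he]
    exact conv_one_le hβ N

lemma main_ineq {β : ℝ} (hβ : 1 < β) : β⁻¹ + (β^(zrun β + 2))⁻¹ ≤ 1 := by
  have hβ0 : (0:ℝ) < β := lt_trans one_pos hβ
  obtain ⟨hnn, he0, ⟨j₀, hj₀1, hj₀⟩, hsum⟩ := epsStar_facts hβ
  set S0 := {i : ℕ | ∀ j : ℕ, 1 ≤ j → j ≤ i → epsStar β j = 0} with hS0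
  have hzr : zrun β = sSup S0 := rfl
  have hbdd : BddAbove S0 := by
    refine ⟨j₀, fun i hi => ?_⟩
    by_contra h
    exact hj₀ (hi j₀ hj₀1 (le_of_lt (not_le.mp h)))
  have h0mem : (0:ℕ) ∈ S0 := by
    intro j h1 h0
    omega
  have hmem : zrun β ∈ S0 := by rw [hzr]; exact Nat.sSup_mem ⟨0, h0mem⟩ hbdd
  have hnot : zrun β + 1 ∉ S0 := by
    intro h
    have := le_csSup hbdd h
    rw [← hzr] at this
    omega
  have hlast : 1 ≤ epsStar β (zrun β + 1) := by
    rw [hS0, Set.mem_setOf_eq] at hnot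
    push_neg at hnot
    obtain ⟨j, h1j, hjle, hjne⟩ := hnot
    have hj : j = zrun β + 1 := by
      by_contra hne
      exact hjne (hmem j h1j (by omega))
    rw [← hj]
    exact lt_of_le_of_ne (hnn j) (Ne.symm hjne)
  -- now bound
  set ℓ := zrun β
  have hsub : ({0, ℓ+1} : Finset ℕ) ⊆ Finset.range (ℓ+2) := by
    intro x hx
    simp only [Finset.mem_insert, Finset.mem_singleton] at hx
    rw [Finset.mem_range]
    omega
  have hterm : ∀ j, 0 ≤ (epsStar β j : ℝ)/β^(j+1) := by
    intro j
    have := hnn j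
    have : (0:ℝ) ≤ (epsStar β j : ℝ) := by exact_mod_cast this
    positivity
  have hpair : ∑ j ∈ ({0, ℓ+1} : Finset ℕ), (epsStar β j : ℝ)/β^(j+1)
      = (epsStar β 0 : ℝ)/β^(0+1) + (epsStar β (ℓ+1) : ℝ)/β^(ℓ+1+1) :=
    Finset.sum_pair (by omega)
  have hle : (epsStar β 0 : ℝ)/β^(0+1) + (epsStar β (ℓ+1) : ℝ)/β^(ℓ+1+1) ≤ 1 := by
    rw [← hpair]
    exact le_trans
      (Finset.sum_le_sum_of_subset_of_nonneg hsub (fun i _ _ => hterm i)) (hsum (ℓ+2))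
  have h1 : (1:ℝ)/β^(0+1) ≤ (epsStar β 0 : ℝ)/β^(0+1) := by
    gcongr
    exact_mod_cast he0
  have h2 : (1:ℝ)/β^(ℓ+1+1) ≤ (epsStar β (ℓ+1) : ℝ)/β^(ℓ+1+1) := by
    gcongr
    exact_mod_cast hlast
  have : (1:ℝ)/β^(0+1) + 1/β^(ℓ+1+1) ≤ 1 := by linarith
  rw [show ℓ+1+1 = ℓ+2 by omega] at this
  rw [pow_one] at this
  rw [one_div, one_div] at this
  exact this

lemma cyl_eq {β : ℝ} (hβ : 1 < β) :
    cyl β (fun k : Fin (zrun β + 2) => if (k : ℕ) = 0 then (1 : ℤ) else 0)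
      = Ico β⁻¹ (β⁻¹ + (β^(zrun β + 2))⁻¹) := by
  have hβ0 : (0:ℝ) < β := lt_trans one_pos hβ
  set ℓ := zrun β with hℓ
  have hfull : β⁻¹ + (β^(ℓ+2))⁻¹ ≤ 1 := main_ineq hβ
  have hp1 : (0:ℝ) < β^(ℓ+1) := pow_pos hβ0 _
  have hinv : β^(ℓ+1) * (β^(ℓ+1))⁻¹ = 1 := mul_inv_cancel₀ (ne_of_gt hp1)
  have hb' : β * (β⁻¹ + (β^(ℓ+2))⁻¹) = 1 + (β^(ℓ+1))⁻¹ := by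
    have h1 : β^(ℓ+2) = β^(ℓ+1) * β := by rw [pow_succ]
    rw [h1]
    have h2 : β^(ℓ+1) ≠ 0 := by positivity
    field_simp
  have hpowle : ∀ j : ℕ, j ≤ ℓ+1 → β^j * (β^(ℓ+1))⁻¹ ≤ 1 := by
    intro j hj
    rw [← div_eq_mul_inv, div_le_one (by positivity)]
    exact pow_le_pow_right₀ hβ.le hj
  ext x
  simp only [cyl, Set.mem_setOf_eq, Set.mem_Ico]
  constructor
  · rintro ⟨⟨hx0, hx1⟩, hd⟩
    have hd0 : dig β x 0 = 1 := by
      have := hd ⟨0, by omega⟩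
      simpa using this
    have hfloor : ⌊β * x⌋ = 1 := by
      rw [dig] at hd0
      simpa using hd0
    obtain ⟨hbx1, hbx2⟩ := Int.floor_eq_iff.mp hfloor
    norm_num at hbx1 hbx2
    set y := β * x - 1 with hy
    have hT1 : Tb β x = y := by
      rw [Tb, Int.fract, hfloor]
      push_cast
      ring
    have claim : ∀ j : ℕ, j ≤ ℓ → (Tb β)^[j+1] x = β^j * y := by
      intro j
      induction j with
      | zero => intro _; simpa using hT1
      | succ j ih =>
        intro hj
        have hih := ih (by omega)
        have hdig : dig β x (j+1) = 0 := by
          have := hd ⟨j+1, by omega⟩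
          simpa using this
        rw [dig, hih] at hdig
        have hmem := Int.floor_eq_zero_iff.mp hdig
        rw [Set.mem_Ico] at hmem
        rw [show j+1+1 = (j+1)+1 from rfl, Function.iterate_succ_apply', hih, Tb,
          Int.fract_eq_self.mpr ⟨hmem.1, hmem.2⟩]
        ring
    have hdig : dig β x (ℓ+1) = 0 := by
      have := hd ⟨ℓ+1, by omega⟩
      simpa using this
    rw [dig, claim ℓ le_rfl] at hdig
    have hmem := Int.floor_eq_zero_iff.mp hdig
    rw [Set.mem_Ico] at hmem
    have hlt1 : β^(ℓ+1) * y < 1 := by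
      have := hmem.2
      rw [pow_succ]
      nlinarith
    have hy2 : y < (β^(ℓ+1))⁻¹ := by nlinarith
    constructor
    · rw [inv_eq_one_div, div_le_iff₀ hβ0]
      nlinarith
    · have : β * x < β * (β⁻¹ + (β^(ℓ+2))⁻¹) := by
        rw [hb']
        simp only [hy] at hy2
        linarith
      exact (mul_lt_mul_iff_right₀ hβ0).mp this
  · rintro ⟨hxa, hxb⟩
    set y := β * x - 1 with hy
    have hy0 : 0 ≤ y := by
      have h1 : β * β⁻¹ ≤ β * x := mul_le_mul_of_nonneg_left hxa hβ0.le
      rw [mul_inv_cancel₀ (ne_of_gt hβ0)] at h1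
      simp only [hy]
      linarith
    have hyub : y < (β^(ℓ+1))⁻¹ := by
      have h1 : β * x < β * (β⁻¹ + (β^(ℓ+2))⁻¹) := (mul_lt_mul_iff_right₀ hβ0).mpr hxb
      rw [hb'] at h1
      simp only [hy]
      linarith
    have hypow : ∀ j : ℕ, j ≤ ℓ+1 → β^j * y < 1 := by
      intro j hj
      calc β^j * y < β^j * (β^(ℓ+1))⁻¹ :=
            mul_lt_mul_of_pos_left hyub (pow_pos hβ0 _)
        _ ≤ 1 := hpowle j hj
    have hy1 : y < 1 := by
      have := hypow 0 (by omega)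
      simpa using this
    have hx0 : 0 ≤ x := le_trans (by positivity) hxa
    have hx1 : x < 1 := lt_of_lt_of_le hxb hfull
    have hfloor : ⌊β * x⌋ = 1 := by
      rw [Int.floor_eq_iff]
      constructor
      · push_cast; linarith
      · push_cast; linarith
    have hT1 : Tb β x = y := by
      rw [Tb, Int.fract, hfloor]
      push_cast
      ring
    have claim : ∀ j : ℕ, j ≤ ℓ → (Tb β)^[j+1] x = β^j * y := by
      intro j
      induction j with
      | zero => intro _; simpa using hT1
      | succ j ih =>
        intro hj
        have hih := ih (by omega)
        have hlt : β^(j+1) * y < 1 := hypow (j+1) (by omega)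
        have h0 : 0 ≤ β^(j+1) * y := by positivity
        rw [show j+1+1 = (j+1)+1 from rfl, Function.iterate_succ_apply', hih, Tb]
        rw [show β * (β^j * y) = β^(j+1) * y by rw [pow_succ]; ring]
        exact Int.fract_eq_self.mpr ⟨h0, hlt⟩
    refine ⟨⟨hx0, hx1⟩, ?_⟩
    rintro ⟨k, hk⟩
    rcases Nat.eq_zero_or_pos k with hk0 | hkpos
    · subst hk0
      simpa [dig] using hfloor
    · obtain ⟨j, rfl⟩ : ∃ j, k = j + 1 := ⟨k - 1, by omega⟩
      have hih : (Tb β)^[j+1] x = β^j * y := claim j (by omega)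
      have hlt : β^(j+1) * y < 1 := hypow (j+1) (by omega)
      have h0 : 0 ≤ β^(j+1) * y := by positivity
      simp only [if_neg (Nat.succ_ne_zero j)]
      rw [dig, hih]
      apply Int.floor_eq_zero_iff.mpr
      rw [Set.mem_Ico]
      constructor
      · exact mul_nonneg hβ0.le (mul_nonneg (pow_nonneg hβ0.le j) hy0)
      · rw [show β * (β^j * y) = β^(j+1) * y by rw [pow_succ]; ring]
        exact hlt

/-- the word 1 0^{ℓ(1,β)+1} is a full word. -/
theorem stmt14 (β : ℝ) (hβ : 1 < β) :
    volume (cyl β (fun k : Fin (zrun β + 2) => if (k : ℕ) = 0 then (1 : ℤ) else 0)) =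
      ENNReal.ofReal ((β ^ (zrun β + 2))⁻¹) := by
  rw [cyl_eq hβ, Real.volume_Ico, add_sub_cancel_left]
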